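/- As formal power series over ℚ[x], log_λ(1 + x·log_λ(1+t)) = Σ_{n≥1} bel_{n,λ}(x) t^n/n!, where bel_{n,λ}(x) = Σ_{k=1}^{n} λ^(k-1) (1)_{k,1/λ} S_{1,λ}(n,k) x^k. -/

import Mathlib

open PowerSeries Finset

noncomputable section

/-- Composition of formal power series (the standard composition when the inner
series `f` has zero constant term, since then `coeff n (f ^ k) = 0` for `k > n`). -/
def pcomp {R : Type*} [CommRing R] (g f : PowerSeries R) : PowerSeries R :=
  PowerSeries.mk fun n =>
    ∑ k ∈ Finset.range (n + 1), PowerSeries.coeff (R := R) k g * PowerSeries.coeff (R := R) n (f ^ k)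

/-- The formal power series `log(1+t)` over `ℚ`. -/
def Lq : PowerSeries ℚ := PowerSeries.mk fun n => if n = 0 then 0 else (-1) ^ (n + 1) / n

/-- The formal power series `-log(1-t)` over `ℚ`. -/
def Labs : PowerSeries ℚ := PowerSeries.mk fun n => if n = 0 then 0 else 1 / n

/-- Signed Stirling numbers of the first kind: `(log(1+t))^k / k! = Σ S₁(n,k) tⁿ/n!`. -/
def S1 (n k : ℕ) : ℚ := n.factorial / k.factorial * PowerSeries.coeff (R := ℚ) n (Lq ^ k)

/-- Unsigned Stirling numbers of the first kind: `(-log(1-t))^k / k! = Σ |s(n,k)| tⁿ/n!`. -/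
def uS1 (n k : ℕ) : ℚ := n.factorial / k.factorial * PowerSeries.coeff (R := ℚ) n (Labs ^ k)

/-- Stirling numbers of the second kind: `(eᵗ-1)^k / k! = Σ S₂(n,k) tⁿ/n!`. -/
def S2 (n k : ℕ) : ℚ :=
  n.factorial / k.factorial * PowerSeries.coeff (R := ℚ) n ((PowerSeries.exp ℚ - 1) ^ k)

/-- `λ^(n-1) * (1)_{n,1/λ} = ∏_{j=1}^{n-1} (λ - j)`. -/
def dc (l : ℚ) (n : ℕ) : ℚ := ∏ j ∈ Finset.Ico 1 n, (l - j)

/-- Degenerate falling factorial `(1)_{n,λ} = ∏_{j=0}^{n-1} (1 - jλ)`. -/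
def ffac (l : ℚ) (n : ℕ) : ℚ := ∏ j ∈ Finset.range n, (1 - j * l)

/-- Degenerate logarithm `log_λ(1+t) = Σ_{n≥1} λ^{n-1}(1)_{n,1/λ} tⁿ/n!`. -/
def Ld (l : ℚ) : PowerSeries ℚ :=
  PowerSeries.mk fun n => if n = 0 then 0 else dc l n / n.factorial

/-- Degenerate exponential `e_λ(t) = Σ_{n≥0} (1)_{n,λ} tⁿ/n!`. -/
def Ed (l : ℚ) : PowerSeries ℚ := PowerSeries.mk fun n => ffac l n / n.factorial

/-- Degenerate Stirling numbers of the first kind. -/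
def S1d (l : ℚ) (n k : ℕ) : ℚ :=
  n.factorial / k.factorial * PowerSeries.coeff (R := ℚ) n (Ld l ^ k)

/-- Degenerate Stirling numbers of the second kind. -/
def S2d (l : ℚ) (n k : ℕ) : ℚ :=
  n.factorial / k.factorial * PowerSeries.coeff (R := ℚ) n ((Ed l - 1) ^ k)

/-- Bell numbers of the second kind: `log(1 + log(1+t)) = Σ_{n≥1} bel_n tⁿ/n!`. -/
def belNum (n : ℕ) : ℚ := n.factorial * PowerSeries.coeff (R := ℚ) n (pcomp Lq Lq)

/-- Bell numbers of the second kind via the explicit formula. -/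
def belN (m : ℕ) : ℚ :=
  ∑ k ∈ Finset.Icc 1 m, (-1) ^ (k - 1) * (k - 1).factorial * S1 m k

/-- Bell polynomials of the second kind. -/
def belPoly (n : ℕ) : Polynomial ℚ :=
  ∑ k ∈ Finset.Icc 1 n,
    Polynomial.C ((-1) ^ (k - 1) * (k - 1).factorial * S1 n k) * Polynomial.X ^ k

/-- Bell polynomials of the second kind evaluated at `x : ℚ`. -/
def belVal (x : ℚ) (m : ℕ) : ℚ :=
  ∑ k ∈ Finset.Icc 1 m, (-1) ^ (k - 1) * (k - 1).factorial * S1 m k * x ^ k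

/-- Degenerate Bell numbers of the second kind via generating function. -/
def belNumD (l : ℚ) (n : ℕ) : ℚ := n.factorial * PowerSeries.coeff (R := ℚ) n (pcomp (Ld l) (Ld l))

/-- Degenerate Bell numbers of the second kind via the explicit formula. -/
def belND (l : ℚ) (m : ℕ) : ℚ := ∑ j ∈ Finset.Icc 1 m, dc l j * S1d l m j

/-- Degenerate Bell polynomials of the second kind. -/
def belPolyD (l : ℚ) (n : ℕ) : Polynomial ℚ :=
  ∑ k ∈ Finset.Icc 1 n, Polynomial.C (dc l k * S1d l n k) * Polynomial.X ^ k

/-- `log(1+t)` as a power series over `ℚ[x]`. -/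
def LqP : PowerSeries (Polynomial ℚ) :=
  PowerSeries.mk fun n => if n = 0 then 0 else Polynomial.C ((-1) ^ (n + 1) / n : ℚ)

/-- `-log(1-t)` as a power series over `ℚ[x]`. -/
def LabsP : PowerSeries (Polynomial ℚ) :=
  PowerSeries.mk fun n => if n = 0 then 0 else Polynomial.C (1 / n : ℚ)

/-- `log(1-t)` as a power series over `ℚ[x]`. -/
def MP : PowerSeries (Polynomial ℚ) :=
  PowerSeries.mk fun n => if n = 0 then 0 else Polynomial.C (-(1 / n) : ℚ)

/-- `log_λ(1+t)` as a power series over `ℚ[x]`. -/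
def LdP (l : ℚ) : PowerSeries (Polynomial ℚ) :=
  PowerSeries.mk fun n => if n = 0 then 0 else Polynomial.C (dc l n / n.factorial)

/-- The polylogarithm `Li_k(y) = Σ_{m≥1} yᵐ/mᵏ` as a power series over `ℚ[x]`. -/
def LiP (k : ℤ) : PowerSeries (Polynomial ℚ) :=
  PowerSeries.mk fun m => if m = 0 then 0 else Polynomial.C (((m : ℚ) ^ k)⁻¹)

/-- The degenerate polylogarithm `Li_{k,λ}` as a power series over `ℚ[x]`. -/
def LidP (l : ℚ) (k : ℤ) : PowerSeries (Polynomial ℚ) :=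
  PowerSeries.mk fun m => if m = 0 then 0 else
    Polynomial.C ((-1) ^ (m - 1) * dc l m / ((m - 1).factorial * (m : ℚ) ^ k))

/-- `-x · log(1-t)` over `ℚ[x]`. -/
def innerP : PowerSeries (Polynomial ℚ) := PowerSeries.C (R := Polynomial ℚ) Polynomial.X * LabsP

/-- `-x · log_λ(1-t)` over `ℚ[x]`. -/
def innerD (l : ℚ) : PowerSeries (Polynomial ℚ) :=
  PowerSeries.C (R := Polynomial ℚ) Polynomial.X *
    PowerSeries.mk fun n => if n = 0 then 0 else
      Polynomial.C ((-1) ^ (n + 1) * dc l n / n.factorial)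

/-- Poly-Bell polynomials of the second kind via generating function. -/
def polyBellP (k : ℤ) (n : ℕ) : Polynomial ℚ :=
  (n.factorial : ℚ) • PowerSeries.coeff (R := (Polynomial ℚ)) n (pcomp (LiP k) innerP)

/-- Poly-Bell polynomials of the second kind via the explicit formula. -/
def belPk (k : ℤ) (n : ℕ) : Polynomial ℚ :=
  ∑ l ∈ Finset.Icc 1 n,
    Polynomial.C ((((l : ℚ) ^ (k - 1))⁻¹) * (l - 1).factorial * uS1 n l) * Polynomial.X ^ l

/-- Degenerate poly-Bell polynomials of the second kind via generating function. -/
def belDPk (l : ℚ) (k : ℤ) (n : ℕ) : Polynomial ℚ :=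
  (n.factorial : ℚ) • PowerSeries.coeff (R := (Polynomial ℚ)) n (pcomp (LidP l k) (innerD l))

/-- Degenerate poly-Bell polynomials of the second kind via the explicit formula. -/
def belE (l : ℚ) (k : ℤ) (m : ℕ) : Polynomial ℚ :=
  (-1 : Polynomial ℚ) ^ (m - 1) *
    ∑ j ∈ Finset.Icc 1 m,
      Polynomial.C ((((j : ℚ) ^ (k - 1))⁻¹) * dc l j * S1d l m j) * Polynomial.X ^ j

lemma coeff_pcomp_of_constantCoeff_eq_zero {R : Type*} [CommRing R] {g : PowerSeries R}
    (hg : constantCoeff g = 0) (f : PowerSeries R) (n : ℕ) :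
    coeff n (pcomp g f) = ∑ k ∈ Icc 1 n, coeff k g * coeff n (f ^ k) := by
  rw [pcomp, coeff_mk, range_eq_Ico, sum_eq_sum_Ico_succ_bot n.succ_pos,
    coeff_zero_eq_constantCoeff_apply, hg, zero_mul, zero_add]
  rfl

lemma coeff_C_X_mul_map_C_pow {R : Type*} [CommRing R] (f : PowerSeries R) (n k : ℕ) :
    coeff n ((C (Polynomial.X : Polynomial R) * map Polynomial.C f) ^ k) =
      Polynomial.C (coeff n (f ^ k)) * Polynomial.X ^ k := by
  rw [mul_pow, ← map_pow, ← map_pow, coeff_C_mul, coeff_map, mul_comm]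

lemma coeff_Ld_of_ne_zero (l : ℚ) {k : ℕ} (hk : k ≠ 0) :
    coeff k (Ld l) = dc l k / k.factorial := by
  simp [Ld, hk]

lemma coeff_Ld_pow (l : ℚ) (n k : ℕ) :
    coeff n (Ld l ^ k) = k.factorial / n.factorial * S1d l n k := by
  rw [S1d]
  field_simp

lemma LdP_eq_map (l : ℚ) : LdP l = map Polynomial.C (Ld l) := by
  refine PowerSeries.ext fun n => ?_
  simp only [LdP, Ld, coeff_mk, coeff_map]
  split_ifs <;> simp

lemma constantCoeff_LdP (l : ℚ) : constantCoeff (LdP l) = 0 := by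
  simp [LdP]

theorem stmt9 (l : ℚ) :
    pcomp (LdP l) (PowerSeries.C (R := Polynomial ℚ) Polynomial.X * LdP l) =
      PowerSeries.mk fun n => (n.factorial : ℚ)⁻¹ • belPolyD l n := by
  refine PowerSeries.ext fun n => ?_
  rw [coeff_pcomp_of_constantCoeff_eq_zero (constantCoeff_LdP l), coeff_mk, belPolyD, smul_sum]
  refine sum_congr rfl fun k hk => ?_
  have hk0 : k ≠ 0 := by rw [mem_Icc] at hk; omega
  rw [LdP_eq_map, coeff_C_X_mul_map_C_pow, coeff_map, coeff_Ld_of_ne_zero l hk0, coeff_Ld_pow,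
    Polynomial.smul_eq_C_mul, ← mul_assoc, ← mul_assoc, ← map_mul, ← map_mul]
  congr 2
  field_simp

end
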